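/- arXiv:1709.09693 — 7 statements merged into one kernel-verified Lean document; each statement's English description precedes it below -/
import Mathlib

section
/- (Case 1 of the proof of Theorem 2.) Assume s1 − s13 ≤ G·φ3 and s2 − s23 ≤ G·φ3, and assume the strong-subadditivity instance s1 + s2 ≥ sA + s12. Then there exists a point (E1, E2, E3) in the convex hull of {T1, T2, T3, T4, T5, T6} ⊂ ℝ³ with E1 ≥ G·φ1, E2 ≥ G·φ2 and E3 ≥ G·φ3. -/
theorem stmt_5 (sA s1 s2 s3 s12 s13 s23 φ1 φ2 φ3 G : ℝ)
    (hsA : 0 ≤ sA) (hs1 : 0 ≤ s1) (hs2 : 0 ≤ s2) (hs3 : 0 ≤ s3)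
    (hs12 : 0 ≤ s12) (hs13 : 0 ≤ s13) (hs23 : 0 ≤ s23)
    (hφ1 : 0 < φ1) (hφ2 : 0 < φ2) (hφ3 : 0 < φ3)
    (hG : G = min (s23 / φ1) (min (s13 / φ2) (min (s12 / φ3)
      (min (s3 / (φ1 + φ2)) (min (s2 / (φ1 + φ3))
        (min (s1 / (φ2 + φ3)) (sA / (φ1 + φ2 + φ3))))))))
    (hc1 : s1 - s13 ≤ G * φ3) (hc2 : s2 - s23 ≤ G * φ3)
    (hssa : s1 + s2 ≥ sA + s12) :
    ∃ E ∈ convexHull ℝ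
      ({(sA - s1, s1 - s12, s12), (sA - s1, s13, s1 - s13),
        (s3 - s13, s13, sA - s3), (s2 - s12, sA - s2, s12),
        (s23, sA - s2, s2 - s23), (s23, s3 - s23, sA - s3)} : Set (ℝ × ℝ × ℝ)),
      E.1 ≥ G * φ1 ∧ E.2.1 ≥ G * φ2 ∧ E.2.2 ≥ G * φ3 := by
  set S : Set (ℝ × ℝ × ℝ) :=
      {(sA - s1, s1 - s12, s12), (sA - s1, s13, s1 - s13),
        (s3 - s13, s13, sA - s3), (s2 - s12, sA - s2, s12),
        (s23, sA - s2, s2 - s23), (s23, s3 - s23, sA - s3)} with hS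
  have hφ13 : 0 < φ1 + φ3 := by linarith
  have hφ23 : 0 < φ2 + φ3 := by linarith
  have hφ123 : 0 < φ1 + φ2 + φ3 := by linarith
  have hga : G ≤ s23 / φ1 := by rw [hG]; exact min_le_left _ _
  have hgb : G ≤ s13 / φ2 := by
    rw [hG]; exact (min_le_right _ _).trans (min_le_left _ _)
  have hgc : G ≤ s12 / φ3 := by
    rw [hG]
    exact (min_le_right _ _).trans ((min_le_right _ _).trans (min_le_left _ _))
  have hg2 : G ≤ s2 / (φ1 + φ3) := by
    rw [hG]
    exact (min_le_right _ _).trans ((min_le_right _ _).trans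
      ((min_le_right _ _).trans ((min_le_right _ _).trans (min_le_left _ _))))
  have hg1 : G ≤ s1 / (φ2 + φ3) := by
    rw [hG]
    exact (min_le_right _ _).trans ((min_le_right _ _).trans
      ((min_le_right _ _).trans ((min_le_right _ _).trans
        ((min_le_right _ _).trans (min_le_left _ _)))))
  have hgA : G ≤ sA / (φ1 + φ2 + φ3) := by
    rw [hG]
    exact (min_le_right _ _).trans ((min_le_right _ _).trans
      ((min_le_right _ _).trans ((min_le_right _ _).trans
        ((min_le_right _ _).trans (min_le_right _ _)))))
  have ha : G * φ1 ≤ s23 := by rwa [← le_div_iff₀ hφ1]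
  have hb : G * φ2 ≤ s13 := by rwa [← le_div_iff₀ hφ2]
  have hc : G * φ3 ≤ s12 := by rwa [← le_div_iff₀ hφ3]
  have h2 : G * (φ1 + φ3) ≤ s2 := by rwa [← le_div_iff₀ hφ13]
  have h1 : G * (φ2 + φ3) ≤ s1 := by rwa [← le_div_iff₀ hφ23]
  have hA : G * (φ1 + φ2 + φ3) ≤ sA := by rwa [← le_div_iff₀ hφ123]
  -- membership of the six points
  have hT1 : ((sA - s1, s1 - s12, s12) : ℝ × ℝ × ℝ) ∈ convexHull ℝ S :=
    subset_convexHull ℝ S (by simp [hS])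
  have hT2 : ((sA - s1, s13, s1 - s13) : ℝ × ℝ × ℝ) ∈ convexHull ℝ S :=
    subset_convexHull ℝ S (by simp [hS])
  have hT4 : ((s2 - s12, sA - s2, s12) : ℝ × ℝ × ℝ) ∈ convexHull ℝ S :=
    subset_convexHull ℝ S (by simp [hS])
  have hT5 : ((s23, sA - s2, s2 - s23) : ℝ × ℝ × ℝ) ∈ convexHull ℝ S :=
    subset_convexHull ℝ S (by simp [hS])
  have hconv : Convex ℝ (convexHull ℝ S) := convex_convexHull ℝ S
  -- Q2 : mix T2 and T1 so third coordinate is G*φ3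
  have hseg2 : G * φ3 ∈ segment ℝ (s1 - s13) s12 := by
    rw [segment_eq_Icc (by linarith)]
    exact ⟨hc1, hc⟩
  obtain ⟨t1, t2, ht1, ht2, hts, hteq⟩ := hseg2
  rw [smul_eq_mul, smul_eq_mul] at hteq
  have hQ2mem : t1 • ((sA - s1, s13, s1 - s13) : ℝ × ℝ × ℝ)
      + t2 • ((sA - s1, s1 - s12, s12) : ℝ × ℝ × ℝ) ∈ convexHull ℝ S :=
    hconv hT2 hT1 ht1 ht2 hts
  have hQ2eq : t1 • ((sA - s1, s13, s1 - s13) : ℝ × ℝ × ℝ)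
      + t2 • ((sA - s1, s1 - s12, s12) : ℝ × ℝ × ℝ)
      = (sA - s1, s1 - G * φ3, G * φ3) := by
    simp only [Prod.smul_mk, Prod.mk_add_mk, smul_eq_mul, Prod.mk.injEq]
    refine ⟨by linear_combination (sA - s1) * hts,
      by linear_combination s1 * hts - hteq, by linear_combination hteq⟩
  rw [hQ2eq] at hQ2mem
  -- Q5 : mix T5 and T4 so third coordinate is G*φ3
  have hseg5 : G * φ3 ∈ segment ℝ (s2 - s23) s12 := by
    rw [segment_eq_Icc (by linarith)]
    exact ⟨hc2, hc⟩
  obtain ⟨u1, u2, hu1, hu2, hus, hueq⟩ := hseg5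
  rw [smul_eq_mul, smul_eq_mul] at hueq
  have hQ5mem : u1 • ((s23, sA - s2, s2 - s23) : ℝ × ℝ × ℝ)
      + u2 • ((s2 - s12, sA - s2, s12) : ℝ × ℝ × ℝ) ∈ convexHull ℝ S :=
    hconv hT5 hT4 hu1 hu2 hus
  have hQ5eq : u1 • ((s23, sA - s2, s2 - s23) : ℝ × ℝ × ℝ)
      + u2 • ((s2 - s12, sA - s2, s12) : ℝ × ℝ × ℝ)
      = (s2 - G * φ3, sA - s2, G * φ3) := by
    simp only [Prod.smul_mk, Prod.mk_add_mk, smul_eq_mul, Prod.mk.injEq]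
    refine ⟨by linear_combination s2 * hus - hueq,
      by linear_combination (sA - s2) * hus, by linear_combination hueq⟩
  rw [hQ5eq] at hQ5mem
  by_cases hcase : G * φ1 ≤ sA - s1
  · refine ⟨(sA - s1, s1 - G * φ3, G * φ3), hQ2mem, hcase, ?_, le_refl _⟩
    show s1 - G * φ3 ≥ G * φ2
    linarith
  · push_neg at hcase
    have hseg : G * φ1 ∈ segment ℝ (sA - s1) (s2 - G * φ3) := by
      rw [segment_eq_Icc (by linarith)]
      exact ⟨hcase.le, by linarith⟩
    obtain ⟨v1, v2, hv1, hv2, hvs, hveq⟩ := hseg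
    rw [smul_eq_mul, smul_eq_mul] at hveq
    refine ⟨v1 • ((sA - s1, s1 - G * φ3, G * φ3) : ℝ × ℝ × ℝ)
      + v2 • ((s2 - G * φ3, sA - s2, G * φ3) : ℝ × ℝ × ℝ),
      hconv hQ2mem hQ5mem hv1 hv2 hvs, ?_, ?_, ?_⟩
    · simp only [Prod.smul_mk, Prod.mk_add_mk, smul_eq_mul]
      linarith [hveq]
    · simp only [Prod.smul_mk, Prod.mk_add_mk, smul_eq_mul]
      have e2 : v1 * (s1 - G * φ3) + v2 * (sA - s2) = sA - G * φ3 - G * φ1 := by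
        linear_combination (sA - G * φ3) * hvs - hveq
      linarith
    · simp only [Prod.smul_mk, Prod.mk_add_mk, smul_eq_mul]
      have e3 : v1 * (G * φ3) + v2 * (G * φ3) = G * φ3 := by
        linear_combination (G * φ3) * hvs
      linarith
end

section
/- (Case 2 of the proof of Theorem 2.) Assume s1 − s13 ≤ G·φ3, s2 − s23 > G·φ3 and sA − s3 ≤ G·φ3, and assume the subadditivity instance s1 + s23 ≥ sA. Then there exists a point (E1, E2, E3) in the convex hull of {T1, T2, T3, T4, T5, T6} ⊂ ℝ³ with E1 ≥ G·φ1, E2 ≥ G·φ2 and E3 ≥ G·φ3. -/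
private lemma combo3 {S : Set (ℝ × ℝ × ℝ)} {p q r : ℝ × ℝ × ℝ}
    (hp : p ∈ S) (hq : q ∈ S) (hr : r ∈ S) {w1 w2 w3 : ℝ}
    (h1 : 0 ≤ w1) (h2 : 0 ≤ w2) (h3 : 0 ≤ w3) (hs : w1 + w2 + w3 = 1) :
    w1 • p + w2 • q + w3 • r ∈ convexHull ℝ S := by
  have hconv : Convex ℝ (convexHull ℝ S) := convex_convexHull ℝ S
  have h := hconv.sum_mem (t := (Finset.univ : Finset (Fin 3)))
    (w := ![w1, w2, w3]) (z := ![p, q, r])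
    (by intro i _; fin_cases i <;> simpa)
    (by simpa [Fin.sum_univ_three] using hs)
    (by intro i _; fin_cases i <;>
        simp [subset_convexHull ℝ S hp, subset_convexHull ℝ S hq,
          subset_convexHull ℝ S hr])
  simpa [Fin.sum_univ_three] using h

private lemma exists_ratio {x d : ℝ} (hd : 0 < d) (h0 : 0 ≤ x) (h1 : x ≤ d) :
    ∃ l : ℝ, 0 ≤ l ∧ l ≤ 1 ∧ l * d = x :=
  ⟨x / d, div_nonneg h0 hd.le, (div_le_one hd).mpr h1, div_mul_cancel₀ _ hd.ne'⟩

set_option maxHeartbeats 1000000 in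
theorem stmt_6 (sA s1 s2 s3 s12 s13 s23 φ1 φ2 φ3 G : ℝ)
    (hsA : 0 ≤ sA) (hs1 : 0 ≤ s1) (hs2 : 0 ≤ s2) (hs3 : 0 ≤ s3)
    (hs12 : 0 ≤ s12) (hs13 : 0 ≤ s13) (hs23 : 0 ≤ s23)
    (hφ1 : 0 < φ1) (hφ2 : 0 < φ2) (hφ3 : 0 < φ3)
    (hG : G = min (s23 / φ1) (min (s13 / φ2) (min (s12 / φ3)
      (min (s3 / (φ1 + φ2)) (min (s2 / (φ1 + φ3))
        (min (s1 / (φ2 + φ3)) (sA / (φ1 + φ2 + φ3))))))))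
    (hc1 : s1 - s13 ≤ G * φ3) (hc2 : s2 - s23 > G * φ3) (hc3 : sA - s3 ≤ G * φ3)
    (hsub : s1 + s23 ≥ sA) :
    ∃ E ∈ convexHull ℝ
      ({(sA - s1, s1 - s12, s12), (sA - s1, s13, s1 - s13),
        (s3 - s13, s13, sA - s3), (s2 - s12, sA - s2, s12),
        (s23, sA - s2, s2 - s23), (s23, s3 - s23, sA - s3)} : Set (ℝ × ℝ × ℝ)),
      E.1 ≥ G * φ1 ∧ E.2.1 ≥ G * φ2 ∧ E.2.2 ≥ G * φ3 := by
  set S : Set (ℝ × ℝ × ℝ) :=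
    {(sA - s1, s1 - s12, s12), (sA - s1, s13, s1 - s13),
      (s3 - s13, s13, sA - s3), (s2 - s12, sA - s2, s12),
      (s23, sA - s2, s2 - s23), (s23, s3 - s23, sA - s3)} with hS
  have hT1 : (sA - s1, s1 - s12, s12) ∈ S := by simp [hS]
  have hT2 : (sA - s1, s13, s1 - s13) ∈ S := by simp [hS]
  have hT5 : (s23, sA - s2, s2 - s23) ∈ S := by simp [hS]
  have hT6 : (s23, s3 - s23, sA - s3) ∈ S := by simp [hS]
  -- extract the seven facts from hG
  have f1 : G * φ1 ≤ s23 := by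
    have h : G ≤ s23 / φ1 := hG ▸ min_le_left _ _
    exact (le_div_iff₀ hφ1).mp h
  have f2 : G * φ2 ≤ s13 := by
    have h : G ≤ s13 / φ2 := hG ▸ le_trans (min_le_right _ _) (min_le_left _ _)
    exact (le_div_iff₀ hφ2).mp h
  have f3 : G * φ3 ≤ s12 := by
    have h : G ≤ s12 / φ3 := hG ▸ le_trans (min_le_right _ _)
      (le_trans (min_le_right _ _) (min_le_left _ _))
    exact (le_div_iff₀ hφ3).mp h
  have f6' : G * (φ2 + φ3) ≤ s1 := by
    have h : G ≤ s1 / (φ2 + φ3) := hG ▸ le_trans (min_le_right _ _)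
      (le_trans (min_le_right _ _) (le_trans (min_le_right _ _)
        (le_trans (min_le_right _ _) (le_trans (min_le_right _ _) (min_le_left _ _)))))
    exact (le_div_iff₀ (by linarith)).mp h
  have f7' : G * (φ1 + φ2 + φ3) ≤ sA := by
    have h : G ≤ sA / (φ1 + φ2 + φ3) := hG ▸ le_trans (min_le_right _ _)
      (le_trans (min_le_right _ _) (le_trans (min_le_right _ _)
        (le_trans (min_le_right _ _) (le_trans (min_le_right _ _) (min_le_right _ _)))))
    exact (le_div_iff₀ (by linarith)).mp h
  have f6 : G * φ2 + G * φ3 ≤ s1 := by rw [mul_add] at f6'; linarith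
  have f7 : G * φ1 + G * φ2 + G * φ3 ≤ sA := by rw [mul_add, mul_add] at f7'; linarith
  by_cases hA : G * φ2 ≤ sA - s2
  · -- Case A : T5 itself works
    exact ⟨(s23, sA - s2, s2 - s23), subset_convexHull ℝ S hT5, f1, hA, le_of_lt hc2⟩
  push_neg at hA
  -- Case B
  have hD : 0 < s13 + s2 - sA := by linarith
  obtain ⟨l1, hl10, hl11, hl1⟩ : ∃ l : ℝ, 0 ≤ l ∧ l ≤ 1 ∧ l * (s13 + s2 - sA) = s13 - G * φ2 :=
    exists_ratio hD (by linarith) (by linarith)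
  have hDq0 : 0 ≤ s1 + s23 - sA := by linarith
  by_cases hz0 : G * φ3 ≤ l1 * (s2 - s23) + (1 - l1) * (s1 - s13)
  · by_cases hx0 : G * φ1 ≤ l1 * s23 + (1 - l1) * (sA - s1)
    · -- Case B1 : point on segment T2–T5 with second coordinate = G*φ2
      refine ⟨(0:ℝ) • ((sA - s1, s1 - s12, s12) : ℝ × ℝ × ℝ)
          + (1 - l1) • ((sA - s1, s13, s1 - s13) : ℝ × ℝ × ℝ)
          + l1 • ((s23, sA - s2, s2 - s23) : ℝ × ℝ × ℝ),
        combo3 hT1 hT2 hT5 le_rfl (by linarith) hl10 (by ring), ?_, ?_, ?_⟩ <;>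
        simp only [Prod.smul_fst, Prod.smul_snd, Prod.fst_add, Prod.snd_add,
          smul_eq_mul, ge_iff_le] <;> linarith [hl1]
    · -- Case B2 : corner (G*φ1, sA - G*φ1 - G*φ3, G*φ3) via T2, T5, T6
      push_neg at hx0
      have hx0ge : sA - s1 ≤ l1 * s23 + (1 - l1) * (sA - s1) := by
        linarith [mul_nonneg hl10 hDq0]
      have hsa : sA < s1 + G * φ1 := by linarith
      have hDq : 0 < s1 + s23 - sA := by linarith
      obtain ⟨w2, hw20, hw21, hw2⟩ :
          ∃ l : ℝ, 0 ≤ l ∧ l ≤ 1 ∧ l * (s1 + s23 - sA) = s23 - G * φ1 :=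
        exists_ratio hDq (by linarith) (by linarith)
      have key : (1 - w2 - l1) * (s1 + s23 - sA)
          = G * φ1 - (l1 * s23 + (1 - l1) * (sA - s1)) := by linarith [hw2, hl1]
      have hwl : 0 < 1 - w2 - l1 := by
        refine lt_of_mul_lt_mul_right ?_ hDq.le
        rw [zero_mul]; linarith [key, hx0]
      have hD' : 0 ≤ (s2 - s23) - (s1 - s13) := by linarith
      -- z_hi' ≥ c
      have hzhi : G * φ3 ≤ w2 * (s1 - s13) + (1 - w2) * (s2 - s23) := by
        linarith [mul_nonneg hwl.le hD', hz0]
      -- z_lo' ≤ c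
      have hzlo : w2 * (s1 - s13) + (1 - w2) * (sA - s3) ≤ G * φ3 := by
        linarith [mul_nonneg hw20 (by linarith : 0 ≤ G * φ3 - (s1 - s13)),
          mul_nonneg (by linarith : (0:ℝ) ≤ 1 - w2) (by linarith : 0 ≤ G * φ3 - (sA - s3))]
      have hdd : 0 < (w2 * (s1 - s13) + (1 - w2) * (s2 - s23))
          - (w2 * (s1 - s13) + (1 - w2) * (sA - s3)) := by
        linarith [mul_pos (by linarith : (0:ℝ) < 1 - w2)
          (by linarith : (0:ℝ) < (s2 - s23) - (sA - s3))]
      obtain ⟨t, ht0, ht1, ht⟩ : ∃ l : ℝ, 0 ≤ l ∧ l ≤ 1 ∧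
          l * ((w2 * (s1 - s13) + (1 - w2) * (s2 - s23))
            - (w2 * (s1 - s13) + (1 - w2) * (sA - s3)))
          = G * φ3 - (w2 * (s1 - s13) + (1 - w2) * (sA - s3)) :=
        exists_ratio hdd (by linarith) (by linarith)
      refine ⟨w2 • ((sA - s1, s13, s1 - s13) : ℝ × ℝ × ℝ)
          + (t * (1 - w2)) • ((s23, sA - s2, s2 - s23) : ℝ × ℝ × ℝ)
          + ((1 - t) * (1 - w2)) • ((s23, s3 - s23, sA - s3) : ℝ × ℝ × ℝ),
        combo3 hT2 hT5 hT6 hw20 (mul_nonneg ht0 (by linarith))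
          (mul_nonneg (by linarith) (by linarith)) (by ring), ?_, ?_, ?_⟩ <;>
        simp only [Prod.smul_fst, Prod.smul_snd, Prod.fst_add, Prod.snd_add,
          smul_eq_mul, ge_iff_le]
      · linarith [hw2]
      · linarith [hw2, ht, f7]
      · linarith [ht]
  · -- Case B3 : corner (sA - G*φ2 - G*φ3, G*φ2, G*φ3) via T1, T2, T5
    push_neg at hz0
    have hx0le : l1 * s23 + (1 - l1) * (sA - s1) ≤ s23 := by
      linarith [mul_nonneg (by linarith : (0:ℝ) ≤ 1 - l1) hDq0]
    have hy0 : l1 * (sA - s2) + (1 - l1) * s13 = G * φ2 := by linarith [hl1]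
    have hsabc : sA < s23 + G * φ2 + G * φ3 := by linarith [hx0le, hy0, hz0]
    have hDp : 0 < s1 + s23 - sA := by linarith
    obtain ⟨w5, hw50, hw51, hw5⟩ :
        ∃ l : ℝ, 0 ≤ l ∧ l ≤ 1 ∧ l * (s1 + s23 - sA) = s1 - G * φ2 - G * φ3 :=
      exists_ratio hDp (by linarith) (by linarith)
    have hkey : s1 - G * φ2 - G * φ3 < l1 * (s1 + s23 - sA) := by linarith [hz0, hl1]
    have hw5l1 : w5 < l1 := lt_of_mul_lt_mul_right (by linarith [hw5, hkey]) hDp.le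
    have hD' : 0 ≤ (s2 - s23) - (s1 - s13) := by linarith
    -- z_lo ≤ c (in fact < c)
    have hzlo : (1 - w5) * (s1 - s13) + w5 * (s2 - s23) < G * φ3 := by
      linarith [mul_nonneg (by linarith : (0:ℝ) ≤ l1 - w5) hD']
    -- z_hi ≥ c
    have hzhi : G * φ3 ≤ (1 - w5) * s12 + w5 * (s2 - s23) := by
      linarith [mul_nonneg hw50 (by linarith : 0 ≤ (s2 - s23) - G * φ3),
        mul_nonneg (by linarith : (0:ℝ) ≤ 1 - w5) (by linarith : 0 ≤ s12 - G * φ3)]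
    have hdd : 0 < ((1 - w5) * s12 + w5 * (s2 - s23))
        - ((1 - w5) * (s1 - s13) + w5 * (s2 - s23)) := by linarith
    obtain ⟨u, hu0, hu1, hu⟩ : ∃ l : ℝ, 0 ≤ l ∧ l ≤ 1 ∧
        l * (((1 - w5) * s12 + w5 * (s2 - s23))
          - ((1 - w5) * (s1 - s13) + w5 * (s2 - s23)))
        = G * φ3 - ((1 - w5) * (s1 - s13) + w5 * (s2 - s23)) :=
      exists_ratio hdd (by linarith) (by linarith)
    refine ⟨(u * (1 - w5)) • ((sA - s1, s1 - s12, s12) : ℝ × ℝ × ℝ)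
        + ((1 - u) * (1 - w5)) • ((sA - s1, s13, s1 - s13) : ℝ × ℝ × ℝ)
        + w5 • ((s23, sA - s2, s2 - s23) : ℝ × ℝ × ℝ),
      combo3 hT1 hT2 hT5 (mul_nonneg hu0 (by linarith))
        (mul_nonneg (by linarith) (by linarith)) hw50 (by ring), ?_, ?_, ?_⟩ <;>
      simp only [Prod.smul_fst, Prod.smul_snd, Prod.fst_add, Prod.snd_add,
        smul_eq_mul, ge_iff_le]
    · linarith [hw5, f7]
    · linarith [hw5, hu]
    · linarith [hu]
end

section
/- (Case 3 of the proof of Theorem 2.) Assume s1 − s13 > G·φ3, sA − s3 ≤ G·φ3 and s2 − s23 ≤ G·φ3, and assume the subadditivity instance s13 + s2 ≥ sA. Then there exists a point (E1, E2, E3) in the convex hull of {T1, T2, T3, T4, T5, T6} ⊂ ℝ³ with E1 ≥ G·φ1, E2 ≥ G·φ2 and E3 ≥ G·φ3. -/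
private lemma between_coeff {y1 y y2 : ℝ} (h1 : y1 ≤ y) (h2 : y ≤ y2) :
    ∃ θ : ℝ, 0 ≤ θ ∧ θ ≤ 1 ∧ (1 - θ) * y1 + θ * y2 = y := by
  rcases eq_or_lt_of_le (h1.trans h2) with h | h
  · exact ⟨0, le_refl _, zero_le_one, by nlinarith⟩
  · refine ⟨(y - y1) / (y2 - y1), div_nonneg (by linarith) (by linarith), ?_, ?_⟩
    · rw [div_le_one (by linarith)]; linarith
    · have hne : y2 - y1 ≠ 0 := ne_of_gt (by linarith)
      field_simp
      ring

private lemma combo_mem {S : Set (ℝ × ℝ × ℝ)} {u v w : ℝ × ℝ × ℝ}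
    (hu : u ∈ convexHull ℝ S) (hv : v ∈ convexHull ℝ S) {θ : ℝ}
    (h0 : 0 ≤ θ) (h1 : θ ≤ 1) (hw : w = (1 - θ) • u + θ • v) :
    w ∈ convexHull ℝ S :=
  hw ▸ (convex_convexHull ℝ S) hu hv (by linarith) h0 (by ring)

/-- segment with fixed first coordinate, parametrized by second coordinate. -/
private lemma segA {S : Set (ℝ × ℝ × ℝ)} {x0 c y1 z1 y2 z2 y : ℝ}
    (hu : ((x0, y1, z1) : ℝ × ℝ × ℝ) ∈ convexHull ℝ S)
    (hv : ((x0, y2, z2) : ℝ × ℝ × ℝ) ∈ convexHull ℝ S)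
    (e1 : y1 + z1 = c) (e2 : y2 + z2 = c) (h1 : y1 ≤ y) (h2 : y ≤ y2) :
    ((x0, y, c - y) : ℝ × ℝ × ℝ) ∈ convexHull ℝ S := by
  obtain ⟨θ, h0, hθ1, hθ⟩ := between_coeff h1 h2
  refine combo_mem hu hv h0 hθ1 ?_
  simp only [Prod.smul_mk, smul_eq_mul, Prod.mk_add_mk, Prod.mk.injEq]
  refine ⟨by ring, by linarith, by linear_combination -(1 - θ) * e1 - θ * e2 + hθ⟩

/-- segment with fixed third coordinate, parametrized by second coordinate. -/
private lemma segB {S : Set (ℝ × ℝ × ℝ)} {z0 c x1 y1 x2 y2 y : ℝ}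
    (hu : ((x1, y1, z0) : ℝ × ℝ × ℝ) ∈ convexHull ℝ S)
    (hv : ((x2, y2, z0) : ℝ × ℝ × ℝ) ∈ convexHull ℝ S)
    (e1 : x1 + y1 = c) (e2 : x2 + y2 = c) (h1 : y1 ≤ y) (h2 : y ≤ y2) :
    ((c - y, y, z0) : ℝ × ℝ × ℝ) ∈ convexHull ℝ S := by
  obtain ⟨θ, h0, hθ1, hθ⟩ := between_coeff h1 h2
  refine combo_mem hu hv h0 hθ1 ?_
  simp only [Prod.smul_mk, smul_eq_mul, Prod.mk_add_mk, Prod.mk.injEq]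
  refine ⟨by linear_combination -(1 - θ) * e1 - θ * e2 + hθ, by linarith, by ring⟩

/-- segment with fixed second coordinate, parametrized by first coordinate. -/
private lemma segC {S : Set (ℝ × ℝ × ℝ)} {y0 c x1 z1 x2 z2 x : ℝ}
    (hu : ((x1, y0, z1) : ℝ × ℝ × ℝ) ∈ convexHull ℝ S)
    (hv : ((x2, y0, z2) : ℝ × ℝ × ℝ) ∈ convexHull ℝ S)
    (e1 : x1 + z1 = c) (e2 : x2 + z2 = c) (h1 : x1 ≤ x) (h2 : x ≤ x2) :
    ((x, y0, c - x) : ℝ × ℝ × ℝ) ∈ convexHull ℝ S := by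
  obtain ⟨θ, h0, hθ1, hθ⟩ := between_coeff h1 h2
  refine combo_mem hu hv h0 hθ1 ?_
  simp only [Prod.smul_mk, smul_eq_mul, Prod.mk_add_mk, Prod.mk.injEq]
  refine ⟨by linarith, by ring, by linear_combination -(1 - θ) * e1 - θ * e2 + hθ⟩

/-- Hexagon lemma: any point of the box-with-sum region lies in the hull of the six `T` points. -/
private lemma hex_mem (sA s1 s2 s3 s12 s13 s23 x y : ℝ)
    (h1 : sA - s1 ≤ x) (h2 : x ≤ s23)
    (h3 : sA - s2 ≤ y) (h4 : y ≤ s13)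
    (h5 : sA - s3 ≤ sA - x - y) (h6 : sA - x - y ≤ s12) :
    ((x, y, sA - x - y) : ℝ × ℝ × ℝ) ∈ convexHull ℝ
      ({(sA - s1, s1 - s12, s12), (sA - s1, s13, s1 - s13),
        (s3 - s13, s13, sA - s3), (s2 - s12, sA - s2, s12),
        (s23, sA - s2, s2 - s23), (s23, s3 - s23, sA - s3)} : Set (ℝ × ℝ × ℝ)) := by
  set S : Set (ℝ × ℝ × ℝ) :=
      {(sA - s1, s1 - s12, s12), (sA - s1, s13, s1 - s13),
        (s3 - s13, s13, sA - s3), (s2 - s12, sA - s2, s12),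
        (s23, sA - s2, s2 - s23), (s23, s3 - s23, sA - s3)} with hS
  have hT1 : ((sA - s1, s1 - s12, s12) : ℝ × ℝ × ℝ) ∈ convexHull ℝ S :=
    subset_convexHull ℝ S (by simp [hS])
  have hT2 : ((sA - s1, s13, s1 - s13) : ℝ × ℝ × ℝ) ∈ convexHull ℝ S :=
    subset_convexHull ℝ S (by simp [hS])
  have hT3 : ((s3 - s13, s13, sA - s3) : ℝ × ℝ × ℝ) ∈ convexHull ℝ S :=
    subset_convexHull ℝ S (by simp [hS])
  have hT4 : ((s2 - s12, sA - s2, s12) : ℝ × ℝ × ℝ) ∈ convexHull ℝ S :=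
    subset_convexHull ℝ S (by simp [hS])
  have hT5 : ((s23, sA - s2, s2 - s23) : ℝ × ℝ × ℝ) ∈ convexHull ℝ S :=
    subset_convexHull ℝ S (by simp [hS])
  have hT6 : ((s23, s3 - s23, sA - s3) : ℝ × ℝ × ℝ) ∈ convexHull ℝ S :=
    subset_convexHull ℝ S (by simp [hS])
  -- left boundary point
  set xL : ℝ := max (sA - s1) (sA - s12 - y) with hxL
  have hL : ((xL, y, (sA - y) - xL) : ℝ × ℝ × ℝ) ∈ convexHull ℝ S := by
    rcases le_total (sA - s12 - y) (sA - s1) with hcase | hcase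
    · rw [hxL, max_eq_left hcase]
      have h := segA (c := s1) hT1 hT2 (by ring) (by ring) (by linarith) h4
      have : (sA - y) - (sA - s1) = s1 - y := by ring
      rw [this]; exact h
    · rw [hxL, max_eq_right hcase]
      have h := segB (c := sA - s12) hT4 hT1 (by ring) (by ring) h3 (by linarith)
      have e : sA - s12 - y = (sA - s12) - y := by ring
      have e2 : (sA - y) - (sA - s12 - y) = s12 := by ring
      rw [e, e2]; exact h
  -- right boundary point
  set xR : ℝ := min s23 (s3 - y) with hxR
  have hR : ((xR, y, (sA - y) - xR) : ℝ × ℝ × ℝ) ∈ convexHull ℝ S := by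
    rcases le_total s23 (s3 - y) with hcase | hcase
    · rw [hxR, min_eq_left hcase]
      have h := segA (c := sA - s23) hT5 hT6 (by ring) (by ring) h3 (by linarith)
      have : (sA - y) - s23 = (sA - s23) - y := by ring
      rw [this]; exact h
    · rw [hxR, min_eq_right hcase]
      have h := segB (c := s3) hT6 hT3 (by ring) (by ring) (by linarith) h4
      have e2 : (sA - y) - (s3 - y) = sA - s3 := by ring
      rw [e2]; exact h
  have hxl : xL ≤ x := max_le h1 (by linarith)
  have hxr : x ≤ xR := le_min h2 (by linarith)
  have h := segC (c := sA - y) hL hR (by ring) (by ring) hxl hxr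
  have e : sA - x - y = (sA - y) - x := by ring
  rw [e]; exact h

theorem stmt_7 (sA s1 s2 s3 s12 s13 s23 φ1 φ2 φ3 G : ℝ)
    (hsA : 0 ≤ sA) (hs1 : 0 ≤ s1) (hs2 : 0 ≤ s2) (hs3 : 0 ≤ s3)
    (hs12 : 0 ≤ s12) (hs13 : 0 ≤ s13) (hs23 : 0 ≤ s23)
    (hφ1 : 0 < φ1) (hφ2 : 0 < φ2) (hφ3 : 0 < φ3)
    (hG : G = min (s23 / φ1) (min (s13 / φ2) (min (s12 / φ3)
      (min (s3 / (φ1 + φ2)) (min (s2 / (φ1 + φ3))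
        (min (s1 / (φ2 + φ3)) (sA / (φ1 + φ2 + φ3))))))))
    (hc1 : s1 - s13 > G * φ3) (hc2 : sA - s3 ≤ G * φ3) (hc3 : s2 - s23 ≤ G * φ3)
    (hsub : s13 + s2 ≥ sA) :
    ∃ E ∈ convexHull ℝ
      ({(sA - s1, s1 - s12, s12), (sA - s1, s13, s1 - s13),
        (s3 - s13, s13, sA - s3), (s2 - s12, sA - s2, s12),
        (s23, sA - s2, s2 - s23), (s23, s3 - s23, sA - s3)} : Set (ℝ × ℝ × ℝ)),
      E.1 ≥ G * φ1 ∧ E.2.1 ≥ G * φ2 ∧ E.2.2 ≥ G * φ3 := by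
  -- basic consequences of the definition of G
  have hg23 : G * φ1 ≤ s23 := by
    have h : G ≤ s23 / φ1 := by rw [hG]; exact min_le_left _ _
    calc G * φ1 ≤ (s23 / φ1) * φ1 := by nlinarith
    _ = s23 := by field_simp
  have hg13 : G * φ2 ≤ s13 := by
    have h : G ≤ s13 / φ2 := by
      rw [hG]; exact (min_le_right _ _).trans (min_le_left _ _)
    calc G * φ2 ≤ (s13 / φ2) * φ2 := by nlinarith
    _ = s13 := by field_simp
  have hg12 : G * φ3 ≤ s12 := by
    have h : G ≤ s12 / φ3 := by
      rw [hG]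
      exact (min_le_right _ _).trans ((min_le_right _ _).trans (min_le_left _ _))
    calc G * φ3 ≤ (s12 / φ3) * φ3 := by nlinarith
    _ = s12 := by field_simp
  have hg2 : G * φ1 + G * φ3 ≤ s2 := by
    have h : G ≤ s2 / (φ1 + φ3) := by
      rw [hG]
      exact (min_le_right _ _).trans ((min_le_right _ _).trans
        ((min_le_right _ _).trans ((min_le_right _ _).trans (min_le_left _ _))))
    have h13 : (0:ℝ) < φ1 + φ3 := by linarith
    calc G * φ1 + G * φ3 = G * (φ1 + φ3) := by ring
    _ ≤ (s2 / (φ1 + φ3)) * (φ1 + φ3) := by nlinarith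
    _ = s2 := by field_simp
  have hgA : G * φ1 + G * φ2 + G * φ3 ≤ sA := by
    have h : G ≤ sA / (φ1 + φ2 + φ3) := by
      rw [hG]
      exact (min_le_right _ _).trans ((min_le_right _ _).trans
        ((min_le_right _ _).trans ((min_le_right _ _).trans
          ((min_le_right _ _).trans (min_le_right _ _)))))
    have h123 : (0:ℝ) < φ1 + φ2 + φ3 := by linarith
    calc G * φ1 + G * φ2 + G * φ3 = G * (φ1 + φ2 + φ3) := by ring
    _ ≤ (sA / (φ1 + φ2 + φ3)) * (φ1 + φ2 + φ3) := by nlinarith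
    _ = sA := by field_simp
  rcases le_or_gt (G * φ1) (sA - s1) with hA | hA
  · -- T2 alone works
    refine ⟨(sA - s1, s13, s1 - s13), subset_convexHull ℝ _ (by simp), hA, hg13, hc1.le⟩
  · -- construct the point (x*, y*, z*)
    set ys : ℝ := max (G * φ2) (sA - s2) with hys
    set zs : ℝ := min s12 (sA - G * φ1 - ys) with hzs
    set xs : ℝ := sA - ys - zs with hxs
    have hy1 : sA - s2 ≤ ys := le_max_right _ _
    have hy2 : ys ≤ s13 := max_le hg13 (by linarith)
    have hyub : ys ≤ sA - G * φ1 - G * φ3 :=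
      max_le (by linarith) (by linarith)
    have hzg3 : G * φ3 ≤ zs := le_min hg12 (by linarith)
    have hz2 : zs ≤ s12 := min_le_left _ _
    have hz1 : sA - s3 ≤ zs := le_trans hc2 hzg3
    have hxa : G * φ1 ≤ xs := by
      have : zs ≤ sA - G * φ1 - ys := min_le_right _ _
      rw [hxs]; linarith
    have hx2 : xs ≤ s23 := by
      rcases min_cases s12 (sA - G * φ1 - ys) with ⟨heq, hle⟩ | ⟨heq, hle⟩
      · rw [hxs, hzs, heq]; linarith
      · rw [hxs, hzs, heq]; linarith
    have hx1 : sA - s1 ≤ xs := by linarith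
    have hz : sA - xs - ys = zs := by rw [hxs]; ring
    have hmem := hex_mem sA s1 s2 s3 s12 s13 s23 xs ys hx1 hx2 hy1 hy2
      (by rw [hz]; exact hz1) (by rw [hz]; exact hz2)
    refine ⟨(xs, ys, sA - xs - ys), hmem, hxa, le_max_left _ _, by rw [hz]; exact hzg3⟩
end

section
/- (Case 4 of the proof of Theorem 2.) Assume s1 − s13 > G·φ3, s2 − s23 > G·φ3 and sA − s3 ≤ G·φ3, and assume the subadditivity instance s13 + s23 ≥ s3. Then there exists a point (E1, E2, E3) in the convex hull of {T1, T2, T3, T4, T5, T6} ⊂ ℝ³ with E1 ≥ G·φ1, E2 ≥ G·φ2 and E3 ≥ G·φ3. -/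
lemma comb3 (θ x y z x' y' z' : ℝ) :
    θ • ((x, y, z) : ℝ × ℝ × ℝ) + (1 - θ) • (x', y', z') =
      (θ * x + (1 - θ) * x', θ * y + (1 - θ) * y', θ * z + (1 - θ) * z') := by
  simp [Prod.ext_iff, smul_eq_mul]

theorem stmt_8 (sA s1 s2 s3 s12 s13 s23 φ1 φ2 φ3 G : ℝ)
    (hsA : 0 ≤ sA) (hs1 : 0 ≤ s1) (hs2 : 0 ≤ s2) (hs3 : 0 ≤ s3)
    (hs12 : 0 ≤ s12) (hs13 : 0 ≤ s13) (hs23 : 0 ≤ s23)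
    (hφ1 : 0 < φ1) (hφ2 : 0 < φ2) (hφ3 : 0 < φ3)
    (hG : G = min (s23 / φ1) (min (s13 / φ2) (min (s12 / φ3)
      (min (s3 / (φ1 + φ2)) (min (s2 / (φ1 + φ3))
        (min (s1 / (φ2 + φ3)) (sA / (φ1 + φ2 + φ3))))))))
    (hc1 : s1 - s13 > G * φ3) (hc2 : s2 - s23 > G * φ3) (hc3 : sA - s3 ≤ G * φ3)
    (hsub : s13 + s23 ≥ s3) :
    ∃ E ∈ convexHull ℝ
      ({(sA - s1, s1 - s12, s12), (sA - s1, s13, s1 - s13),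
        (s3 - s13, s13, sA - s3), (s2 - s12, sA - s2, s12),
        (s23, sA - s2, s2 - s23), (s23, s3 - s23, sA - s3)} : Set (ℝ × ℝ × ℝ)),
      E.1 ≥ G * φ1 ∧ E.2.1 ≥ G * φ2 ∧ E.2.2 ≥ G * φ3 := by
  set S : Set (ℝ × ℝ × ℝ) :=
      {(sA - s1, s1 - s12, s12), (sA - s1, s13, s1 - s13),
        (s3 - s13, s13, sA - s3), (s2 - s12, sA - s2, s12),
        (s23, sA - s2, s2 - s23), (s23, s3 - s23, sA - s3)} with hS
  have hconv : Convex ℝ (convexHull ℝ S) := convex_convexHull ℝ S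
  -- basic G facts
  have hle1 : G ≤ s23 / φ1 := by rw [hG]; exact min_le_left _ _
  have hle2 : G ≤ s13 / φ2 := by
    rw [hG]; exact le_trans (min_le_right _ _) (min_le_left _ _)
  have hleA : G ≤ sA / (φ1 + φ2 + φ3) := by
    rw [hG]
    exact le_trans (min_le_right _ _) (le_trans (min_le_right _ _)
      (le_trans (min_le_right _ _) (le_trans (min_le_right _ _)
        (le_trans (min_le_right _ _) (min_le_right _ _)))))
  have hGs23 : G * φ1 ≤ s23 := (le_div_iff₀ hφ1).mp hle1
  have hGs13 : G * φ2 ≤ s13 := (le_div_iff₀ hφ2).mp hle2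
  have hGsA : G * (φ1 + φ2 + φ3) ≤ sA := (le_div_iff₀ (by linarith)).mp hleA
  -- memberships of the six points
  have hT2 : ((sA - s1, s13, s1 - s13) : ℝ × ℝ × ℝ) ∈ convexHull ℝ S :=
    subset_convexHull ℝ S (by rw [hS]; right; left; rfl)
  have hT3 : ((s3 - s13, s13, sA - s3) : ℝ × ℝ × ℝ) ∈ convexHull ℝ S :=
    subset_convexHull ℝ S (by rw [hS]; right; right; left; rfl)
  have hT5 : ((s23, sA - s2, s2 - s23) : ℝ × ℝ × ℝ) ∈ convexHull ℝ S :=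
    subset_convexHull ℝ S (by rw [hS]; right; right; right; right; left; rfl)
  have hT6 : ((s23, s3 - s23, sA - s3) : ℝ × ℝ × ℝ) ∈ convexHull ℝ S :=
    subset_convexHull ℝ S (by rw [hS]; right; right; right; right; right; rfl)
  -- the point P = μ T2 + (1-μ) T3 = (sA - s13 - Gφ3, s13, Gφ3)
  have hd1 : (0:ℝ) < s1 - s13 - (sA - s3) := by linarith
  set μ : ℝ := (G * φ3 - (sA - s3)) / (s1 - s13 - (sA - s3)) with hμ
  have hμ0 : 0 ≤ μ := div_nonneg (by linarith) (le_of_lt hd1)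
  have hμ1 : μ ≤ 1 := (div_le_one hd1).mpr (by linarith)
  have hμd : μ * (s1 - s13 - (sA - s3)) = G * φ3 - (sA - s3) := by
    rw [hμ]; field_simp
  have hP : ((sA - s13 - G * φ3, s13, G * φ3) : ℝ × ℝ × ℝ) ∈ convexHull ℝ S := by
    have heq : ((sA - s13 - G * φ3, s13, G * φ3) : ℝ × ℝ × ℝ) =
        μ • (sA - s1, s13, s1 - s13) + (1 - μ) • (s3 - s13, s13, sA - s3) := by
      rw [comb3, Prod.ext_iff, Prod.ext_iff]
      refine ⟨by linear_combination hμd, by ring, by linear_combination -hμd⟩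
    rw [heq]
    exact hconv hT2 hT3 hμ0 (by linarith) (by ring)
  -- the point Q = ν T5 + (1-ν) T6 = (s23, sA - s23 - Gφ3, Gφ3)
  have hd2 : (0:ℝ) < s2 - s23 - (sA - s3) := by linarith
  set ν : ℝ := (G * φ3 - (sA - s3)) / (s2 - s23 - (sA - s3)) with hν
  have hν0 : 0 ≤ ν := div_nonneg (by linarith) (le_of_lt hd2)
  have hν1 : ν ≤ 1 := (div_le_one hd2).mpr (by linarith)
  have hνd : ν * (s2 - s23 - (sA - s3)) = G * φ3 - (sA - s3) := by
    rw [hν]; field_simp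
  have hQ : ((s23, sA - s23 - G * φ3, G * φ3) : ℝ × ℝ × ℝ) ∈ convexHull ℝ S := by
    have heq : ((s23, sA - s23 - G * φ3, G * φ3) : ℝ × ℝ × ℝ) =
        ν • (s23, sA - s2, s2 - s23) + (1 - ν) • (s23, s3 - s23, sA - s3) := by
      rw [comb3, Prod.ext_iff, Prod.ext_iff]
      refine ⟨by ring, by linear_combination hνd, by linear_combination -hνd⟩
    rw [heq]
    exact hconv hT5 hT6 hν0 (by linarith) (by ring)
  by_cases hca : G * φ2 ≤ sA - s23 - G * φ3
  · exact ⟨(s23, sA - s23 - G * φ3, G * φ3), hQ, hGs23, hca, le_refl _⟩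
  by_cases hcb : G * φ1 ≤ sA - s13 - G * φ3
  · exact ⟨(sA - s13 - G * φ3, s13, G * φ3), hP, hcb, hGs13, le_refl _⟩
  -- mixed case
  push_neg at hca hcb
  have hd3 : (0:ℝ) < s23 - (sA - s13 - G * φ3) := by linarith
  set t : ℝ := (s23 - G * φ1) / (s23 - (sA - s13 - G * φ3)) with ht
  have ht0 : 0 ≤ t := div_nonneg (by linarith) (le_of_lt hd3)
  have ht1 : t ≤ 1 := (div_le_one hd3).mpr (by linarith)
  have htd : t * (s23 - (sA - s13 - G * φ3)) = s23 - G * φ1 := by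
    rw [ht]; field_simp
  refine ⟨(G * φ1, sA - G * φ3 - G * φ1, G * φ3), ?_, le_refl _,
    show G * φ2 ≤ sA - G * φ3 - G * φ1 by linarith, le_refl _⟩
  have heq : ((G * φ1, sA - G * φ3 - G * φ1, G * φ3) : ℝ × ℝ × ℝ) =
      t • (sA - s13 - G * φ3, s13, G * φ3) + (1 - t) • (s23, sA - s23 - G * φ3, G * φ3) := by
    rw [comb3, Prod.ext_iff, Prod.ext_iff]
    refine ⟨by linear_combination htd, by linear_combination -htd, by ring⟩
  rw [heq]
  exact hconv hP hQ ht0 (by linarith) (by ring)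
end

section
/- (Case 5 of the proof of Theorem 2.) Assume sA − s3 > G·φ3, and assume the subadditivity instance s13 + s23 ≥ s3. Then there exists a point (E1, E2, E3) in the convex hull of {T1, T2, T3, T4, T5, T6} ⊂ ℝ³ with E1 ≥ G·φ1, E2 ≥ G·φ2 and E3 ≥ G·φ3. -/
theorem stmt_9 (sA s1 s2 s3 s12 s13 s23 φ1 φ2 φ3 G : ℝ)
    (hsA : 0 ≤ sA) (hs1 : 0 ≤ s1) (hs2 : 0 ≤ s2) (hs3 : 0 ≤ s3)
    (hs12 : 0 ≤ s12) (hs13 : 0 ≤ s13) (hs23 : 0 ≤ s23)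
    (hφ1 : 0 < φ1) (hφ2 : 0 < φ2) (hφ3 : 0 < φ3)
    (hG : G = min (s23 / φ1) (min (s13 / φ2) (min (s12 / φ3)
      (min (s3 / (φ1 + φ2)) (min (s2 / (φ1 + φ3))
        (min (s1 / (φ2 + φ3)) (sA / (φ1 + φ2 + φ3))))))))
    (hc1 : sA - s3 > G * φ3)
    (hsub : s13 + s23 ≥ s3) :
    ∃ E ∈ convexHull ℝ
      ({(sA - s1, s1 - s12, s12), (sA - s1, s13, s1 - s13),
        (s3 - s13, s13, sA - s3), (s2 - s12, sA - s2, s12),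
        (s23, sA - s2, s2 - s23), (s23, s3 - s23, sA - s3)} : Set (ℝ × ℝ × ℝ)),
      E.1 ≥ G * φ1 ∧ E.2.1 ≥ G * φ2 ∧ E.2.2 ≥ G * φ3 := by
  set S : Set (ℝ × ℝ × ℝ) :=
      {(sA - s1, s1 - s12, s12), (sA - s1, s13, s1 - s13),
        (s3 - s13, s13, sA - s3), (s2 - s12, sA - s2, s12),
        (s23, sA - s2, s2 - s23), (s23, s3 - s23, sA - s3)} with hS
  have hGle1 : G * φ1 ≤ s23 := by
    have h : G ≤ s23 / φ1 := by rw [hG]; exact min_le_left _ _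
    exact (le_div_iff₀ hφ1).mp h
  have hGle2 : G * φ2 ≤ s13 := by
    have h : G ≤ s13 / φ2 := by
      rw [hG]; exact le_trans (min_le_right _ _) (min_le_left _ _)
    exact (le_div_iff₀ hφ2).mp h
  have hGle12 : G * (φ1 + φ2) ≤ s3 := by
    have h : G ≤ s3 / (φ1 + φ2) := by
      rw [hG]
      exact le_trans (min_le_right _ _) (le_trans (min_le_right _ _)
        (le_trans (min_le_right _ _) (min_le_left _ _)))
    exact (le_div_iff₀ (by linarith)).mp h
  have hT3 : (s3 - s13, s13, sA - s3) ∈ convexHull ℝ S :=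
    subset_convexHull ℝ S (by simp [hS])
  have hT6 : (s23, s3 - s23, sA - s3) ∈ convexHull ℝ S :=
    subset_convexHull ℝ S (by simp [hS])
  by_cases h6 : G * φ2 ≤ s3 - s23
  · exact ⟨(s23, s3 - s23, sA - s3), hT6, hGle1, h6, le_of_lt hc1⟩
  by_cases h3 : G * φ1 ≤ s3 - s13
  · exact ⟨(s3 - s13, s13, sA - s3), hT3, h3, hGle2, le_of_lt hc1⟩
  push_neg at h6 h3
  refine ⟨(G * φ1, s3 - G * φ1, sA - s3), ?_, le_refl _, show s3 - G * φ1 ≥ G * φ2 by nlinarith [hGle12], le_of_lt hc1⟩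
  have hd : 0 < s13 + s23 - s3 := by linarith
  set t : ℝ := (G * φ1 - (s3 - s13)) / (s13 + s23 - s3) with ht
  have ht0 : 0 ≤ t := div_nonneg (by linarith) (le_of_lt hd)
  have ht1 : t ≤ 1 := by
    rw [ht, div_le_one hd]; linarith
  have := (convex_convexHull ℝ S).segment_subset hT3 hT6
  apply this
  refine ⟨1 - t, t, by linarith, ht0, by ring, ?_⟩
  have htd : t * (s13 + s23 - s3) = G * φ1 - (s3 - s13) := by
    rw [ht, div_mul_cancel₀ _ (ne_of_gt hd)]
  simp only [Prod.smul_mk, Prod.mk_add_mk, smul_eq_mul, Prod.mk.injEq]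
  refine ⟨by nlinarith, by nlinarith, by ring⟩
end

section
/- (Arithmetic core of Theorem 2.) Assume the strong-subadditivity and subadditivity instances: s12 + s13 ≥ s1, s1 + s3 ≥ sA + s13, s12 + s23 ≥ s2, s2 + s3 ≥ sA + s23, s1 + s2 ≥ sA + s12, s1 + s23 ≥ sA, s13 + s2 ≥ sA, and s13 + s23 ≥ s3. Then there exists a point (E1, E2, E3) in the convex hull of {T1, T2, T3, T4, T5, T6} ⊂ ℝ³ with E1 ≥ G·φ1, E2 ≥ G·φ2 and E3 ≥ G·φ3. Consequently min_i { E_i / φ_i } ≥ G for this convex combination, which is inequality (C2) of the paper. -/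
lemma combo_hull {V : Type*} [AddCommGroup V] [Module ℝ V] {S : Set V} {A B P : V}
    (hA : A ∈ convexHull ℝ S) (hB : B ∈ convexHull ℝ S) (cA cB : ℝ)
    (h0A : 0 ≤ cA) (h0B : 0 ≤ cB)
    (heq : (cA + cB) • P = cA • A + cB • B)
    (hdeg : cA + cB = 0 → P = A) :
    P ∈ convexHull ℝ S := by
  rcases (add_nonneg h0A h0B).lt_or_eq with h | h
  · have hP : P = (cA / (cA + cB)) • A + (cB / (cA + cB)) • B := by
      rw [div_eq_inv_mul, div_eq_inv_mul, mul_smul, mul_smul, ← smul_add, ← heq, smul_smul,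
        inv_mul_cancel₀ h.ne', one_smul]
    rw [hP]
    exact (convex_convexHull ℝ S) hA hB (by positivity) (by positivity) (by field_simp)
  · rw [hdeg h.symm]; exact hA

lemma hex (sA s1 s2 s3 s12 s13 s23 x y z : ℝ)
    (hx1 : x ≤ s23) (hx2 : sA - s1 ≤ x)
    (hy1 : y ≤ s13) (hy2 : sA - s2 ≤ y)
    (hz1 : z ≤ s12) (hz2 : sA - s3 ≤ z)
    (hsum : x + y + z = sA) :
    (x, y, z) ∈ convexHull ℝ
      ({(sA - s1, s1 - s12, s12), (sA - s1, s13, s1 - s13),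
        (s3 - s13, s13, sA - s3), (s2 - s12, sA - s2, s12),
        (s23, sA - s2, s2 - s23), (s23, s3 - s23, sA - s3)} : Set (ℝ × ℝ × ℝ)) := by
  set S : Set (ℝ × ℝ × ℝ) :=
      {(sA - s1, s1 - s12, s12), (sA - s1, s13, s1 - s13),
        (s3 - s13, s13, sA - s3), (s2 - s12, sA - s2, s12),
        (s23, sA - s2, s2 - s23), (s23, s3 - s23, sA - s3)} with hS
  have hT1 : ((sA - s1, s1 - s12, s12) : ℝ × ℝ × ℝ) ∈ convexHull ℝ S :=
    subset_convexHull ℝ S (by simp [hS])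
  have hT2 : ((sA - s1, s13, s1 - s13) : ℝ × ℝ × ℝ) ∈ convexHull ℝ S :=
    subset_convexHull ℝ S (by simp [hS])
  have hT3 : ((s3 - s13, s13, sA - s3) : ℝ × ℝ × ℝ) ∈ convexHull ℝ S :=
    subset_convexHull ℝ S (by simp [hS])
  have hT4 : ((s2 - s12, sA - s2, s12) : ℝ × ℝ × ℝ) ∈ convexHull ℝ S :=
    subset_convexHull ℝ S (by simp [hS])
  have hT5 : ((s23, sA - s2, s2 - s23) : ℝ × ℝ × ℝ) ∈ convexHull ℝ S :=
    subset_convexHull ℝ S (by simp [hS])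
  have hT6 : ((s23, s3 - s23, sA - s3) : ℝ × ℝ × ℝ) ∈ convexHull ℝ S :=
    subset_convexHull ℝ S (by simp [hS])
  set tp := min (s23 - x) (s2 - x - z) with htp
  set tm := min (x - (sA - s1)) (s13 - y) with htm
  have htp0 : 0 ≤ tp := le_min (by linarith) (by linarith)
  have htm0 : 0 ≤ tm := le_min (by linarith) (by linarith)
  have hQp : ((x + tp, y - tp, z) : ℝ × ℝ × ℝ) ∈ convexHull ℝ S := by
    rcases le_total (s23 - x) (s2 - x - z) with hc | hc
    · have ht : tp = s23 - x := by rw [htp]; exact min_eq_left hc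
      have hq : ((x + tp, y - tp, z) : ℝ × ℝ × ℝ) = (s23, sA - s23 - z, z) := by
        rw [ht]; refine Prod.ext ?_ (Prod.ext ?_ ?_) <;> dsimp only <;> linarith
      rw [hq]
      refine combo_hull hT5 hT6 (z - (sA - s3)) (s2 - s23 - z) (by linarith) (by linarith) ?_ ?_
      · simp only [Prod.smul_mk, Prod.mk_add_mk, smul_eq_mul]
        refine Prod.ext ?_ (Prod.ext ?_ ?_) <;> dsimp only <;> ring
      · intro h
        refine Prod.ext ?_ (Prod.ext ?_ ?_) <;> dsimp only <;> linarith
    · have ht : tp = s2 - x - z := by rw [htp]; exact min_eq_right hc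
      have hq : ((x + tp, y - tp, z) : ℝ × ℝ × ℝ) = (s2 - z, sA - s2, z) := by
        rw [ht]; refine Prod.ext ?_ (Prod.ext ?_ ?_) <;> dsimp only <;> linarith
      rw [hq]
      refine combo_hull hT4 hT5 (z - (s2 - s23)) (s12 - z) (by linarith) (by linarith) ?_ ?_
      · simp only [Prod.smul_mk, Prod.mk_add_mk, smul_eq_mul]
        refine Prod.ext ?_ (Prod.ext ?_ ?_) <;> dsimp only <;> ring
      · intro h
        refine Prod.ext ?_ (Prod.ext ?_ ?_) <;> dsimp only <;> linarith
  have hQm : ((x - tm, y + tm, z) : ℝ × ℝ × ℝ) ∈ convexHull ℝ S := by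
    rcases le_total (x - (sA - s1)) (s13 - y) with hc | hc
    · have ht : tm = x - (sA - s1) := by rw [htm]; exact min_eq_left hc
      have hq : ((x - tm, y + tm, z) : ℝ × ℝ × ℝ) = (sA - s1, s1 - z, z) := by
        rw [ht]; refine Prod.ext ?_ (Prod.ext ?_ ?_) <;> dsimp only <;> linarith
      rw [hq]
      refine combo_hull hT1 hT2 (z - (s1 - s13)) (s12 - z) (by linarith) (by linarith) ?_ ?_
      · simp only [Prod.smul_mk, Prod.mk_add_mk, smul_eq_mul]
        refine Prod.ext ?_ (Prod.ext ?_ ?_) <;> dsimp only <;> ring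
      · intro h
        refine Prod.ext ?_ (Prod.ext ?_ ?_) <;> dsimp only <;> linarith
    · have ht : tm = s13 - y := by rw [htm]; exact min_eq_right hc
      have hq : ((x - tm, y + tm, z) : ℝ × ℝ × ℝ) = (sA - s13 - z, s13, z) := by
        rw [ht]; refine Prod.ext ?_ (Prod.ext ?_ ?_) <;> dsimp only <;> linarith
      rw [hq]
      refine combo_hull hT2 hT3 (z - (sA - s3)) (s1 - s13 - z) (by linarith) (by linarith) ?_ ?_
      · simp only [Prod.smul_mk, Prod.mk_add_mk, smul_eq_mul]
        refine Prod.ext ?_ (Prod.ext ?_ ?_) <;> dsimp only <;> ring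
      · intro h
        refine Prod.ext ?_ (Prod.ext ?_ ?_) <;> dsimp only <;> linarith
  refine combo_hull hQm hQp tp tm htp0 htm0 ?_ ?_
  · simp only [Prod.smul_mk, Prod.mk_add_mk, smul_eq_mul]
    refine Prod.ext ?_ (Prod.ext ?_ ?_) <;> dsimp only <;> ring
  · intro h
    refine Prod.ext ?_ (Prod.ext ?_ ?_) <;> dsimp only <;> linarith
theorem stmt_10 (sA s1 s2 s3 s12 s13 s23 φ1 φ2 φ3 G : ℝ)
    (hsA : 0 ≤ sA) (hs1 : 0 ≤ s1) (hs2 : 0 ≤ s2) (hs3 : 0 ≤ s3)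
    (hs12 : 0 ≤ s12) (hs13 : 0 ≤ s13) (hs23 : 0 ≤ s23)
    (hφ1 : 0 < φ1) (hφ2 : 0 < φ2) (hφ3 : 0 < φ3)
    (hG : G = min (s23 / φ1) (min (s13 / φ2) (min (s12 / φ3)
      (min (s3 / (φ1 + φ2)) (min (s2 / (φ1 + φ3))
        (min (s1 / (φ2 + φ3)) (sA / (φ1 + φ2 + φ3))))))))
    (h1 : s12 + s13 ≥ s1) (h2 : s1 + s3 ≥ sA + s13)
    (h3 : s12 + s23 ≥ s2) (h4 : s2 + s3 ≥ sA + s23)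
    (h5 : s1 + s2 ≥ sA + s12) (h6 : s1 + s23 ≥ sA)
    (h7 : s13 + s2 ≥ sA) (h8 : s13 + s23 ≥ s3) :
    ∃ E ∈ convexHull ℝ
      ({(sA - s1, s1 - s12, s12), (sA - s1, s13, s1 - s13),
        (s3 - s13, s13, sA - s3), (s2 - s12, sA - s2, s12),
        (s23, sA - s2, s2 - s23), (s23, s3 - s23, sA - s3)} : Set (ℝ × ℝ × ℝ)),
      (E.1 ≥ G * φ1 ∧ E.2.1 ≥ G * φ2 ∧ E.2.2 ≥ G * φ3) ∧
      min (E.1 / φ1) (min (E.2.1 / φ2) (E.2.2 / φ3)) ≥ G := by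
  have hφ12 : (0:ℝ) < φ1 + φ2 := by linarith
  have hφ13 : (0:ℝ) < φ1 + φ3 := by linarith
  have hφ23 : (0:ℝ) < φ2 + φ3 := by linarith
  have hφ123 : (0:ℝ) < φ1 + φ2 + φ3 := by linarith
  have g1 : G ≤ s23 / φ1 := by rw [hG]; exact min_le_left _ _
  have g2 : G ≤ s13 / φ2 := by
    rw [hG]; exact (min_le_right _ _).trans (min_le_left _ _)
  have g3 : G ≤ s12 / φ3 := by
    rw [hG]; exact (min_le_right _ _).trans ((min_le_right _ _).trans (min_le_left _ _))
  have g4 : G ≤ s3 / (φ1 + φ2) := by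
    rw [hG]
    exact (min_le_right _ _).trans ((min_le_right _ _).trans
      ((min_le_right _ _).trans (min_le_left _ _)))
  have g5 : G ≤ s2 / (φ1 + φ3) := by
    rw [hG]
    exact (min_le_right _ _).trans ((min_le_right _ _).trans
      ((min_le_right _ _).trans ((min_le_right _ _).trans (min_le_left _ _))))
  have g6 : G ≤ s1 / (φ2 + φ3) := by
    rw [hG]
    exact (min_le_right _ _).trans ((min_le_right _ _).trans
      ((min_le_right _ _).trans ((min_le_right _ _).trans
        ((min_le_right _ _).trans (min_le_left _ _)))))
  have g7 : G ≤ sA / (φ1 + φ2 + φ3) := by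
    rw [hG]
    exact (min_le_right _ _).trans ((min_le_right _ _).trans
      ((min_le_right _ _).trans ((min_le_right _ _).trans
        ((min_le_right _ _).trans (min_le_right _ _)))))
  have b1 : G * φ1 ≤ s23 := (le_div_iff₀ hφ1).mp g1
  have b2 : G * φ2 ≤ s13 := (le_div_iff₀ hφ2).mp g2
  have b3 : G * φ3 ≤ s12 := (le_div_iff₀ hφ3).mp g3
  have b4 : G * φ1 + G * φ2 ≤ s3 := by
    have h := (le_div_iff₀ hφ12).mp g4; rw [mul_add] at h; exact h
  have b5 : G * φ1 + G * φ3 ≤ s2 := by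
    have h := (le_div_iff₀ hφ13).mp g5; rw [mul_add] at h; exact h
  have b6 : G * φ2 + G * φ3 ≤ s1 := by
    have h := (le_div_iff₀ hφ23).mp g6; rw [mul_add] at h; exact h
  have b7 : G * φ1 + G * φ2 + G * φ3 ≤ sA := by
    have h := (le_div_iff₀ hφ123).mp g7; rw [mul_add, mul_add] at h; exact h
  set a := G * φ1 with ha
  set b := G * φ2 with hb
  set c := G * φ3 with hc
  have h9 : sA ≤ s3 + s12 := by linarith
  have h10 : sA ≤ s12 + s13 + s23 := by linarith
  set D := sA - (a + b + c) with hD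
  have hD0 : 0 ≤ D := by linarith
  set q1 := s1 - b - c with hq1d
  set q2 := s2 - a - c with hq2d
  set q3 := s3 - a - b with hq3d
  have hq1 : 0 ≤ q1 := by linarith
  have hq2 : 0 ≤ q2 := by linarith
  have hq3 : 0 ≤ q3 := by linarith
  set p1 := s23 - a with hp1d
  set p2 := s13 - b with hp2d
  set p3 := s12 - c with hp3d
  set m1 := max 0 (D - q1) with hm1d
  set m2 := max 0 (D - q2) with hm2d
  set m3 := max 0 (D - q3) with hm3d
  have hm1l : 0 ≤ m1 := le_max_left _ _
  have hm2l : 0 ≤ m2 := le_max_left _ _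
  have hm3l : 0 ≤ m3 := le_max_left _ _
  have hm1r : D - q1 ≤ m1 := le_max_right _ _
  have hm2r : D - q2 ≤ m2 := le_max_right _ _
  have hm3r : D - q3 ≤ m3 := le_max_right _ _
  have hm1c : m1 = 0 ∨ m1 = D - q1 := max_choice _ _
  have hm2c : m2 = 0 ∨ m2 = D - q2 := max_choice _ _
  have hm3c : m3 = 0 ∨ m3 = D - q3 := max_choice _ _
  have hm1p : m1 ≤ p1 := by rcases hm1c with h | h <;> rw [h] <;> linarith
  have hm2p : m2 ≤ p2 := by rcases hm2c with h | h <;> rw [h] <;> linarith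
  have hm3p : m3 ≤ p3 := by rcases hm3c with h | h <;> rw [h] <;> linarith
  have hp12 : D ≤ q1 + q2 := by linarith
  have hp13 : D ≤ q1 + q3 := by linarith
  have hp23 : D ≤ q2 + q3 := by linarith
  have hp123 : D + D ≤ q1 + q2 + q3 := by linarith
  have hR0 : m1 + m2 + m3 ≤ D := by
    rcases hm1c with e1 | e1 <;> rcases hm2c with e2 | e2 <;> rcases hm3c with e3 | e3 <;>
      rw [e1, e2, e3] <;> linarith
  set R := D - m1 - m2 - m3 with hRd
  have hR : 0 ≤ R := by linarith
  set u1 := min R (p1 - m1) with hu1d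
  have hu1a : u1 ≤ R := min_le_left _ _
  have hu1b : u1 ≤ p1 - m1 := min_le_right _ _
  have hu1z : 0 ≤ u1 := le_min hR (by linarith)
  have hu1c : u1 = R ∨ u1 = p1 - m1 := min_choice _ _
  set u2 := min (R - u1) (p2 - m2) with hu2d
  have hu2a : u2 ≤ R - u1 := min_le_left _ _
  have hu2b : u2 ≤ p2 - m2 := min_le_right _ _
  have hu2z : 0 ≤ u2 := le_min (by linarith) (by linarith)
  have hu2c : u2 = R - u1 ∨ u2 = p2 - m2 := min_choice _ _
  have hz1 : c + (D - (m1 + u1) - (m2 + u2)) ≤ s12 := by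
    rcases hu1c with e1 | e1 <;> rcases hu2c with e2 | e2 <;> linarith
  refine ⟨(a + (m1 + u1), b + (m2 + u2), c + (D - (m1 + u1) - (m2 + u2))),
    hex sA s1 s2 s3 s12 s13 s23 _ _ _ (by linarith) (by linarith) (by linarith) (by linarith)
      hz1 (by linarith) (by linarith), ⟨?_, ?_, ?_⟩, ?_⟩
  · dsimp only; linarith
  · dsimp only; linarith
  · dsimp only; linarith
  · dsimp only
    refine le_min ?_ (le_min ?_ ?_)
    · rw [le_div_iff₀ hφ1]; linarith
    · rw [le_div_iff₀ hφ2]; linarith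
    · rw [le_div_iff₀ hφ3]; linarith
end

section
/- Let R ≥ 0, Eρ ≥ 0, L ≥ 0 and Eσ > 0 be real numbers. Suppose that for every ε > 0 there exists a positive integer n such that ⌈R·n⌉·Eσ − n·Eρ ≤ ε·⌈R·n⌉·L + (1+ε)·h(ε/(1+ε)), where h(x) = −x·log₂x − (1−x)·log₂(1−x) is the binary entropy (with h(0) = h(1) = 0). Then R ≤ Eρ/Eσ. -/
/-- The binary entropy function `h(x) = -x log₂ x - (1-x) log₂ (1-x)`.
Since `Real.logb 2 0 = 0` in Mathlib, this definition automatically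
satisfies `h 0 = 0` and `h 1 = 0`. -/
noncomputable def binEnt (x : ℝ) : ℝ :=
  -x * Real.logb 2 x - (1 - x) * Real.logb 2 (1 - x)

lemma binEnt_eq : binEnt = fun x : ℝ =>
    (-(x * Real.log x) - ((1 - x) * Real.log (1 - x))) / Real.log 2 := by
  funext x
  unfold binEnt Real.logb
  ring

lemma binEnt_continuous : Continuous binEnt := by
  rw [binEnt_eq]
  exact ((Real.continuous_mul_log.neg.sub
    (Real.continuous_mul_log.comp (continuous_const.sub continuous_id))).div_const _)

lemma binEnt_zero : binEnt 0 = 0 := by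
  simp [binEnt]

lemma binEnt_nonneg {x : ℝ} (h0 : 0 ≤ x) (h1 : x ≤ 1) : 0 ≤ binEnt x := by
  unfold binEnt
  have hx : Real.logb 2 x ≤ 0 := Real.logb_nonpos (by norm_num) h0 h1
  have hy : Real.logb 2 (1 - x) ≤ 0 :=
    Real.logb_nonpos (by norm_num) (by linarith) (by linarith)
  nlinarith

theorem stmt_11 (R Eρ L Eσ : ℝ) (hR : 0 ≤ R) (hEρ : 0 ≤ Eρ) (hL : 0 ≤ L) (hEσ : 0 < Eσ)
    (h : ∀ ε : ℝ, 0 < ε → ∃ n : ℕ, 0 < n ∧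
      (⌈R * (n : ℝ)⌉ : ℝ) * Eσ - (n : ℝ) * Eρ ≤
        ε * (⌈R * (n : ℝ)⌉ : ℝ) * L + (1 + ε) * binEnt (ε / (1 + ε))) :
    R ≤ Eρ / Eσ := by
  set f : ℝ → ℝ := fun ε => ε * (R * L + L) + (1 + ε) * binEnt (ε / (1 + ε)) with hf
  -- key pointwise bound
  have key : ∀ ε : ℝ, 0 < ε → R * Eσ - Eρ ≤ f ε := by
    intro ε hε
    obtain ⟨n, hn, hineq⟩ := h ε hε
    have hn1 : (1 : ℝ) ≤ (n : ℝ) := by exact_mod_cast hn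
    set m : ℝ := (⌈R * (n : ℝ)⌉ : ℝ) with hm
    have hm1 : R * (n : ℝ) ≤ m := Int.le_ceil _
    have hm2 : m ≤ R * (n : ℝ) + 1 := le_of_lt (Int.ceil_lt_add_one _)
    have ht0 : 0 ≤ ε / (1 + ε) := by positivity
    have ht1 : ε / (1 + ε) ≤ 1 := by
      rw [div_le_one (by linarith)]; linarith
    have hC : 0 ≤ (1 + ε) * binEnt (ε / (1 + ε)) :=
      mul_nonneg (by linarith) (binEnt_nonneg ht0 ht1)
    set C : ℝ := (1 + ε) * binEnt (ε / (1 + ε)) with hCdef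
    have step : (n : ℝ) * (R * Eσ - Eρ - ε * R * L) ≤ ε * L + C := by
      nlinarith [mul_le_mul_of_nonneg_right hm1 hEσ.le,
        mul_le_mul_of_nonneg_left hm2 (mul_nonneg hε.le hL)]
    by_cases hcase : R * Eσ - Eρ - ε * R * L ≤ 0
    · have : 0 ≤ ε * L := mul_nonneg hε.le hL
      simp only [hf]
      nlinarith
    · push_neg at hcase
      have := mul_le_mul_of_nonneg_right hn1 hcase.le
      simp only [hf]
      nlinarith
  -- f tends to 0 as ε → 0⁺
  have hfc : ContinuousAt f 0 := by
    apply ContinuousAt.add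
    · exact (continuous_id.mul continuous_const).continuousAt
    · apply ContinuousAt.mul
      · exact (continuous_const.add continuous_id).continuousAt
      · apply ContinuousAt.comp binEnt_continuous.continuousAt
        exact ContinuousAt.div continuous_id.continuousAt
          (continuous_const.add continuous_id).continuousAt (by norm_num)
  have hf0 : f 0 = 0 := by simp [hf, binEnt_zero]
  have htend : Filter.Tendsto f (nhdsWithin 0 (Set.Ioi 0)) (nhds 0) := by
    have h2 : Filter.Tendsto f (nhdsWithin 0 (Set.Ioi 0)) (nhds (f 0)) :=
      (hfc.continuousWithinAt (s := Set.Ioi 0)).tendsto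
    rwa [hf0] at h2
  have hle : R * Eσ - Eρ ≤ 0 := by
    refine ge_of_tendsto htend ?_
    filter_upwards [self_mem_nhdsWithin] with ε hε
    exact key ε hε
  rw [le_div_iff₀ hEσ]
  linarith
end
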